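/- Let X be a finite alphabet. For x ∈ X^n let Ĥ_x be the empirical entropy of x and let P̃_n(x) = 2^{−nĤ_x} / ∑_{x'∈X^n} 2^{−nĤ_{x'}} be the universal guessing distribution. Then for every ρ > 0 and ε > 0 there exists N ∈ ℕ such that for all n ≥ N and all x ∈ X^n with Ĥ_x > 0: P̃_n(x) · ∑_{k=1}^∞ k^ρ (1 − P̃_n(x))^{k−1} ≤ 2^{n(ρ Ĥ_x + ε)}. -/

import Mathlib

/-!
Since `2^{-nĤ_x} = ∏ᵢ P̂_x(xᵢ)` is the probability of `x` under the i.i.d. law of its own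
empirical distribution, every type class carries total weight at most `1`, so the normaliser of
`P̃_n` is at most the number of types, `(n + 1)^|X|`, and `1 / P̃_n(x) ≤ (n + 1)^|X| 2^{nĤ_x}`.
For guesses that succeed with probability `p`, dominating `(k + 1)^ρ (1 - p)^k` by a multiple of
`(1 - p/2)^k` bounds the `ρ`-th moment by `O_ρ(p^{-ρ})`. The polynomial factor `(n + 1)^{|X|ρ}`
is eventually absorbed into `2^{nε}`.
-/

open Finset

variable {X : Type*} [Fintype X] [DecidableEq X]

/-- Number of occurrences of the symbol `a` in the string `x ∈ X^n`. -/
def occ {n : ℕ} (x : Fin n → X) (a : X) : ℕ :=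
  (Finset.univ.filter fun i => x i = a).card

/-- Empirical entropy (base 2) of the string `x ∈ X^n`, with `0 log 0 = 0`. -/
noncomputable def empEnt {n : ℕ} (x : Fin n → X) : ℝ :=
  -∑ a : X, ((occ x a : ℝ) / n) * Real.logb 2 ((occ x a : ℝ) / n)

/-- The universal guessing distribution `P̃_n(x) = 2^{-nĤ_x}/∑_{x'} 2^{-nĤ_{x'}}`. -/
noncomputable def univDist {n : ℕ} (x : Fin n → X) : ℝ :=
  (2 : ℝ) ^ (-(n : ℝ) * empEnt x) / ∑ x' : Fin n → X, (2 : ℝ) ^ (-(n : ℝ) * empEnt x')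

noncomputable def empDist {n : ℕ} (x : Fin n → X) (a : X) : ℝ :=
  occ x a / n

omit [Fintype X] in
lemma occ_le {n : ℕ} (x : Fin n → X) (a : X) : occ x a ≤ n :=
  (Finset.card_filter_le _ _).trans_eq (Finset.card_fin n)

lemma sum_occ {n : ℕ} (x : Fin n → X) : ∑ a, occ x a = n := by
  simpa [occ] using (Finset.card_eq_sum_card_fiberwise (s := univ) (t := univ)
    fun i _ => mem_univ (x i)).symm

lemma sum_empDist {n : ℕ} (hn : n ≠ 0) (x : Fin n → X) : ∑ a, empDist x a = 1 := by
  simp only [empDist, ← Finset.sum_div, ← Nat.cast_sum, sum_occ]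
  exact div_self (Nat.cast_ne_zero.2 hn)

lemma prod_comp_eq_prod_pow_occ {M : Type*} [CommMonoid M] {n : ℕ} (x : Fin n → X) (f : X → M) :
    ∏ i, f (x i) = ∏ a, f a ^ occ x a := by
  rw [← Finset.prod_fiberwise_of_maps_to (t := univ) (fun i _ => mem_univ (x i))]
  refine Finset.prod_congr rfl fun a _ => ?_
  rw [occ, Finset.prod_congr rfl fun i hi => by rw [(mem_filter.1 hi).2], Finset.prod_const]

lemma two_rpow_neg_mul_empEnt {n : ℕ} (x : Fin n → X) :
    (2 : ℝ) ^ (-(n : ℝ) * empEnt x) = ∏ i, empDist x (x i) := by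
  rw [prod_comp_eq_prod_pow_occ, empEnt, neg_mul_neg, Finset.mul_sum,
    Real.rpow_sum_of_pos two_pos]
  refine Finset.prod_congr rfl fun a _ => ?_
  rcases Nat.eq_zero_or_pos (occ x a) with h | h
  · simp [h]
  · obtain ⟨i, -⟩ := Finset.card_pos.1 h
    have hn : (n : ℝ) ≠ 0 := Nat.cast_ne_zero.2 i.pos.ne'
    have hq : 0 < (occ x a : ℝ) / n := div_pos (by exact_mod_cast h) (by positivity)
    rw [← mul_assoc, mul_div_cancel₀ _ hn, mul_comm, Real.rpow_mul_natCast zero_le_two,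
      Real.rpow_logb two_pos (by norm_num) hq]
    rfl

/-- The type class of `x` in the sense of the method of types. -/
def typeClass {n : ℕ} (x : Fin n → X) : Finset (Fin n → X) :=
  univ.filter fun x' => occ x' = occ x

lemma sum_two_rpow_neg_mul_empEnt_typeClass_le_one {n : ℕ} (x : Fin n → X) :
    ∑ x' ∈ typeClass x, (2 : ℝ) ^ (-(n : ℝ) * empEnt x') ≤ 1 :=
  calc ∑ x' ∈ typeClass x, (2 : ℝ) ^ (-(n : ℝ) * empEnt x')
      = ∑ x' ∈ typeClass x, ∏ i, empDist x (x' i) := by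
        refine Finset.sum_congr rfl fun x' hx' => ?_
        simp only [two_rpow_neg_mul_empEnt, empDist, (mem_filter.1 hx').2]
    _ ≤ ∑ x' : Fin n → X, ∏ i, empDist x (x' i) :=
        Finset.sum_le_sum_of_subset_of_nonneg (filter_subset _ _)
          fun _ _ _ => Finset.prod_nonneg fun _ _ => by unfold empDist; positivity
    _ = ∏ _i : Fin n, ∑ a, empDist x a := (Fintype.prod_sum _).symm
    _ = 1 := Finset.prod_eq_one fun i _ => sum_empDist i.pos.ne' x

lemma sum_two_rpow_neg_mul_empEnt_le {n : ℕ} :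
    ∑ x : Fin n → X, (2 : ℝ) ^ (-(n : ℝ) * empEnt x) ≤ ((n : ℝ) + 1) ^ Fintype.card X := by
  rw [← Finset.sum_fiberwise_of_maps_to (g := occ) (t := Fintype.piFinset fun _ => range (n + 1))
    fun x _ => Fintype.mem_piFinset.2 fun a => mem_range.2 (Nat.lt_succ_of_le (occ_le x a))]
  calc _ ≤ ∑ _j ∈ Fintype.piFinset fun _ : X => range (n + 1), (1 : ℝ) := by
        refine Finset.sum_le_sum fun j _ => ?_
        rcases (univ.filter fun x : Fin n → X => occ x = j).eq_empty_or_nonempty with h | ⟨x, hx⟩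
        · simp [h]
        · rw [← (mem_filter.1 hx).2]
          exact sum_two_rpow_neg_mul_empEnt_typeClass_le_one x
    _ = ((n : ℝ) + 1) ^ Fintype.card X := by simp

lemma univDist_pos {n : ℕ} (x : Fin n → X) : 0 < univDist x :=
  div_pos (by positivity) (Finset.sum_pos (fun _ _ => by positivity) ⟨x, mem_univ x⟩)

lemma univDist_le_one {n : ℕ} (x : Fin n → X) : univDist x ≤ 1 :=
  div_le_one_of_le₀
    (Finset.single_le_sum (f := fun x' : Fin n → X => (2 : ℝ) ^ (-(n : ℝ) * empEnt x'))
      (fun _ _ => by positivity) (mem_univ x))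
    (Finset.sum_nonneg fun _ _ => by positivity)

lemma inv_univDist_le {n : ℕ} (x : Fin n → X) :
    (univDist x)⁻¹ ≤ ((n : ℝ) + 1) ^ Fintype.card X * (2 : ℝ) ^ ((n : ℝ) * empEnt x) := by
  rw [univDist, inv_div, div_eq_mul_inv, ← Real.rpow_neg zero_le_two, neg_mul, neg_neg]
  gcongr
  exact sum_two_rpow_neg_mul_empEnt_le

lemma rpow_le_div_rpow_mul_exp {ρ c y : ℝ} (hρ : 0 < ρ) (hc : 0 < c) (hy : 0 < y) :
    y ^ ρ ≤ (ρ / c) ^ ρ * Real.exp (c * y) := by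
  have hlog := Real.log_le_sub_one_of_pos (show 0 < c * y / ρ by positivity)
  rw [Real.log_div (by positivity) hρ.ne', Real.log_mul hc.ne' hy.ne'] at hlog
  rw [Real.rpow_def_of_pos hy, Real.rpow_def_of_pos (by positivity), ← Real.exp_add,
    Real.exp_le_exp, Real.log_div hρ.ne' hc.ne']
  have h : c * y / ρ * ρ = c * y := div_mul_cancel₀ _ hρ.ne'
  nlinarith

lemma exp_half_mul_one_sub_le {p : ℝ} (hp : 0 ≤ p) : Real.exp (p / 2) * (1 - p) ≤ 1 - p / 2 := by
  have h : Real.exp (p / 2) * (1 - p / 2) ≤ 1 :=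
    calc Real.exp (p / 2) * (1 - p / 2) ≤ Real.exp (p / 2) * Real.exp (-(p / 2)) := by
          gcongr; linarith [Real.add_one_le_exp (-(p / 2))]
      _ = 1 := by rw [← Real.exp_add, add_neg_cancel, Real.exp_zero]
  nlinarith [Real.one_le_exp (by positivity : 0 ≤ p / 2)]

lemma rpow_mul_one_sub_pow_le {ρ p : ℝ} (hρ : 0 < ρ) (hp0 : 0 < p) (hp1 : p ≤ 1) (k : ℕ) :
    ((k : ℝ) + 1) ^ ρ * (1 - p) ^ k ≤ (2 * ρ / p) ^ ρ * Real.exp 1 * (1 - p / 2) ^ k := by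
  have hpow : ((k : ℝ) + 1) ^ ρ ≤ (2 * ρ / p) ^ ρ * (Real.exp (p / 2) * Real.exp (p / 2) ^ k) := by
    rw [← Real.exp_nat_mul, ← Real.exp_add, show 2 * ρ / p = ρ / (p / 2) by field_simp]
    convert rpow_le_div_rpow_mul_exp hρ (half_pos hp0) (by positivity : (0 : ℝ) < k + 1) using 3
    ring
  have hratio : (Real.exp (p / 2) * (1 - p)) ^ k ≤ (1 - p / 2) ^ k :=
    pow_le_pow_left₀ (mul_nonneg (Real.exp_pos _).le (by linarith))
      (exp_half_mul_one_sub_le hp0.le) k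
  have hexp : Real.exp (p / 2) ≤ Real.exp 1 := Real.exp_le_exp.2 (by linarith)
  calc ((k : ℝ) + 1) ^ ρ * (1 - p) ^ k
      ≤ (2 * ρ / p) ^ ρ * (Real.exp (p / 2) * Real.exp (p / 2) ^ k) * (1 - p) ^ k := by gcongr
    _ = (2 * ρ / p) ^ ρ * Real.exp (p / 2) * (Real.exp (p / 2) * (1 - p)) ^ k := by
        rw [mul_pow]; ring
    _ ≤ (2 * ρ / p) ^ ρ * Real.exp 1 * (1 - p / 2) ^ k := by gcongr

lemma mul_tsum_rpow_mul_one_sub_pow_le {ρ p : ℝ} (hρ : 0 < ρ) (hp0 : 0 < p) (hp1 : p ≤ 1) :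
    p * ∑' k : ℕ, ((k : ℝ) + 1) ^ ρ * (1 - p) ^ k ≤ 2 * (2 * ρ) ^ ρ * Real.exp 1 * p⁻¹ ^ ρ := by
  have hr0 : 0 ≤ 1 - p / 2 := by linarith
  have hr1 : 1 - p / 2 < 1 := by linarith
  have hgeom : Summable fun k : ℕ => (2 * ρ / p) ^ ρ * Real.exp 1 * (1 - p / 2) ^ k :=
    (summable_geometric_of_lt_one hr0 hr1).mul_left _
  have hbound := rpow_mul_one_sub_pow_le hρ hp0 hp1
  calc p * ∑' k : ℕ, ((k : ℝ) + 1) ^ ρ * (1 - p) ^ k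
      ≤ p * ∑' k : ℕ, (2 * ρ / p) ^ ρ * Real.exp 1 * (1 - p / 2) ^ k := by
        refine mul_le_mul_of_nonneg_left ?_ hp0.le
        refine (hgeom.of_nonneg_of_le (fun k => ?_) hbound).tsum_le_tsum hbound hgeom
        exact mul_nonneg (by positivity) (pow_nonneg (by linarith) k)
    _ = 2 * (2 * ρ) ^ ρ * Real.exp 1 * p⁻¹ ^ ρ := by
        rw [tsum_mul_left, tsum_geometric_of_lt_one hr0 hr1, sub_sub_cancel, inv_div,
          div_eq_mul_inv, Real.mul_rpow (by positivity) (by positivity)]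
        field_simp

lemma eventually_mul_rpow_le_two_rpow (C a : ℝ) {ε : ℝ} (hε : 0 < ε) :
    ∀ᶠ n : ℕ in Filter.atTop, C * ((n : ℝ) + 1) ^ a ≤ (2 : ℝ) ^ ((n : ℝ) * ε) := by
  have hb : 0 < Real.log 2 * ε := mul_pos (Real.log_pos one_lt_two) hε
  have ho : (fun x : ℝ => C * x ^ a) =o[Filter.atTop] fun x => (2 : ℝ) ^ ((x - 1) * ε) := by
    refine ((isLittleO_rpow_exp_pos_mul_atTop a hb).const_mul_left C).trans_isBigO ?_
    refine Asymptotics.IsBigO.of_bound ((2 : ℝ) ^ ε) (Filter.Eventually.of_forall fun x => ?_)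
    rw [Real.norm_of_nonneg (Real.exp_pos _).le, Real.norm_of_nonneg (by positivity),
      ← Real.rpow_add two_pos, Real.rpow_def_of_pos two_pos]
    exact (congrArg Real.exp (by ring)).le
  have hshift : Filter.Tendsto (fun n : ℕ => (n : ℝ) + 1) Filter.atTop Filter.atTop :=
    Filter.tendsto_atTop_add_const_right _ _ tendsto_natCast_atTop_atTop
  filter_upwards [(ho.comp_tendsto hshift).bound one_pos] with n hn
  simp only [Function.comp_apply, add_sub_cancel_right, one_mul, Real.norm_eq_abs] at hn
  exact (le_abs_self _).trans (hn.trans_eq (abs_of_pos (by positivity)))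

theorem univDist_conditional_moment_general (ρ ε : ℝ) (hρ : 0 < ρ) (hε : 0 < ε) :
    ∃ N : ℕ, ∀ n : ℕ, N ≤ n → ∀ x : Fin n → X, 0 < empEnt x →
      univDist x * ∑' k : ℕ, ((k : ℝ) + 1) ^ ρ * (1 - univDist x) ^ k ≤
        (2 : ℝ) ^ ((n : ℝ) * (ρ * empEnt x + ε)) := by
  set C := 2 * (2 * ρ) ^ ρ * Real.exp 1
  obtain ⟨N, hN⟩ := Filter.eventually_atTop.1
    (eventually_mul_rpow_le_two_rpow C (Fintype.card X * ρ) hε)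
  refine ⟨N, fun n hn x _ => ?_⟩
  calc univDist x * ∑' k : ℕ, ((k : ℝ) + 1) ^ ρ * (1 - univDist x) ^ k
      ≤ C * (univDist x)⁻¹ ^ ρ :=
        mul_tsum_rpow_mul_one_sub_pow_le hρ (univDist_pos x) (univDist_le_one x)
    _ ≤ C * (((n : ℝ) + 1) ^ Fintype.card X * (2 : ℝ) ^ ((n : ℝ) * empEnt x)) ^ ρ := by
        gcongr
        · exact inv_nonneg.2 (univDist_pos x).le
        · exact inv_univDist_le x
    _ = C * ((n : ℝ) + 1) ^ (Fintype.card X * ρ) * (2 : ℝ) ^ ((n : ℝ) * (ρ * empEnt x)) := by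
        rw [Real.mul_rpow (by positivity) (by positivity), ← Real.rpow_natCast,
          ← Real.rpow_mul (by positivity), ← Real.rpow_mul zero_le_two]
        ring_nf
    _ ≤ (2 : ℝ) ^ ((n : ℝ) * ε) * (2 : ℝ) ^ ((n : ℝ) * (ρ * empEnt x)) := by
        gcongr
        exact hN n hn
    _ = (2 : ℝ) ^ ((n : ℝ) * (ρ * empEnt x + ε)) := by
        rw [← Real.rpow_add two_pos]
        ring_nf

/-- The conditional `ρ`-th guessing moment of independent random guesses drawn
from the universal distribution is at most `2^{n(ρĤ_x + ε)}`, uniformly in `x`,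
for all large enough `n`. -/
theorem univDist_conditional_moment [Nonempty X] (ρ ε : ℝ) (hρ : 0 < ρ) (hε : 0 < ε) :
    ∃ N : ℕ, ∀ n : ℕ, N ≤ n → ∀ x : Fin n → X, 0 < empEnt x →
      univDist x * ∑' k : ℕ, ((k : ℝ) + 1) ^ ρ * (1 - univDist x) ^ k ≤
        (2 : ℝ) ^ ((n : ℝ) * (ρ * empEnt x + ε)) :=
  univDist_conditional_moment_general ρ ε hρ hε
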